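/- arXiv:1204.0502 — 3 statements merged into one kernel-verified Lean document; each statement's English description precedes it below -/
import Mathlib

section
/- Let $k \geq 1$, let $\psi, \phi$ be Dirichlet characters, and set $\sigma(n) = \sum_{ad = n} \psi(a)\phi(d)d^{k-1}$. Then for all positive integers $m, n$: $\sigma(m)\sigma(n) = \sum_{d \mid \gcd(m,n)} \psi(d)\phi(d) d^{k-1} \sigma(mn/d^2)$. -/
/-!
`σ` is the Dirichlet convolution of the completely multiplicative functions `ψ` and
`φ · id ^ (k - 1)`, so both sides of the relation are sums of
`F t = ψ (m n / t) φ t t ^ (k - 1)`: the left one over pairs `(a, b)` with `a ∣ m`, `b ∣ n`,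
`t = a b`, the right one over pairs `(d, e)` with `d ∣ gcd m n`, `e ∣ m n / d²`, `t = d e`.
These pairs correspond bijectively: `(a, b) ↔ (d, e)` exactly when `a b = d e` and
`a d = gcd m (a b)`, i.e. `d = gcd (m / a) b`.
-/

namespace Nat

theorem gcd_mul_eq_mul_gcd_div {a m : ℕ} (b : ℕ) (ham : a ∣ m) :
    gcd m (a * b) = a * gcd (m / a) b := by
  conv_lhs => rw [← Nat.mul_div_cancel' ham]
  exact gcd_mul_left a (m / a) b

theorem gcd_div_dvd_gcd {a b m n : ℕ} (ham : a ∣ m) (hbn : b ∣ n) :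
    gcd (m / a) b ∣ gcd m n :=
  dvd_gcd ((gcd_dvd_left _ _).trans (div_dvd_of_dvd ham)) ((gcd_dvd_right _ _).trans hbn)

theorem mul_div_gcd_dvd_mul_div_sq {a b m n : ℕ} (ham : a ∣ m) (hbn : b ∣ n) :
    a * b / gcd (m / a) b ∣ m * n / gcd (m / a) b ^ 2 := by
  set d := gcd (m / a) b
  have hdb : d ∣ b := gcd_dvd_right _ _
  have had : a * d ∣ m := gcd_mul_eq_mul_gcd_div b ham ▸ gcd_dvd_left m (a * b)
  have hd2 : d ^ 2 ∣ m * n :=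
    pow_two d ▸ mul_dvd_mul (dvd_of_mul_left_dvd had) (hdb.trans hbn)
  have hd2ab : d ^ 2 * (a * b / d) = a * d * b :=
    calc d ^ 2 * (a * b / d) = a * d * (d * (b / d)) := by rw [Nat.mul_div_assoc a hdb]; ring
      _ = a * d * b := by rw [Nat.mul_div_cancel' hdb]
  rw [dvd_div_iff_mul_dvd hd2, hd2ab]
  exact mul_dvd_mul had hbn

theorem mul_div_gcd_div_dvd {d e m n : ℕ} (hm : m ≠ 0) (hdm : d ∣ m) (hdn : d ∣ n)
    (hde : d ^ 2 * e ∣ m * n) :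
    d * e / (gcd m (d * e) / d) ∣ n := by
  have hd : 0 < d := pos_of_dvd_of_pos hdm (pos_of_ne_zero hm)
  have hdg : d ∣ gcd m (d * e) := dvd_gcd hdm (dvd_mul_right d e)
  have ha : 0 < gcd m (d * e) / d :=
    div_pos (le_of_dvd (gcd_pos_of_pos_left _ (pos_of_ne_zero hm)) hdg) hd
  have hade : gcd m (d * e) / d ∣ d * e := (div_dvd_of_dvd hdg).trans (gcd_dvd_right _ _)
  rw [div_dvd_iff_dvd_mul hade ha, ← Nat.mul_dvd_mul_iff_left hd,
    ← mul_assoc d (gcd m (d * e) / d), Nat.mul_div_cancel' hdg, ← gcd_mul_right]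
  refine dvd_gcd (by rwa [← mul_assoc, ← pow_two]) ?_
  rw [mul_comm d (d * e)]
  exact mul_dvd_mul_left _ hdn

theorem gcd_div_gcd_div_eq {d e m : ℕ} (hm : m ≠ 0) (hdm : d ∣ m) :
    gcd (m / (gcd m (d * e) / d)) (d * e / (gcd m (d * e) / d)) = d := by
  have hdg : d ∣ gcd m (d * e) := dvd_gcd hdm (dvd_mul_right d e)
  have ha : gcd m (d * e) / d ∣ gcd m (d * e) := div_dvd_of_dvd hdg
  rw [gcd_div (ha.trans (gcd_dvd_left _ _)) (ha.trans (gcd_dvd_right _ _)),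
    Nat.div_div_self hdg (gcd_ne_zero_left hm)]

theorem sq_dvd_mul_of_dvd_gcd {d m n : ℕ} (h : d ∣ gcd m n) : d ^ 2 ∣ m * n :=
  pow_two d ▸ mul_dvd_mul (h.trans (gcd_dvd_left m n)) (h.trans (gcd_dvd_right m n))

theorem sum_divisors_mul_divisors_eq_sum_gcd {M : Type*} [AddCommMonoid M] (f : ℕ → M)
    (m n : ℕ) :
    ∑ a ∈ m.divisors, ∑ b ∈ n.divisors, f (a * b) =
      ∑ d ∈ (gcd m n).divisors, ∑ e ∈ (m * n / d ^ 2).divisors, f (d * e) := by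
  rcases eq_or_ne m 0 with rfl | hm
  · simp
  rcases eq_or_ne n 0 with rfl | hn
  · simp
  rw [← Finset.sum_product', Finset.sum_sigma']
  refine Finset.sum_nbij'
    (fun x ↦ ⟨gcd (m / x.1) x.2, x.1 * x.2 / gcd (m / x.1) x.2⟩)
    (fun y ↦ (gcd m (y.1 * y.2) / y.1, y.1 * y.2 / (gcd m (y.1 * y.2) / y.1))) ?_ ?_ ?_ ?_ ?_
  · rintro ⟨a, b⟩ hab
    simp only [Finset.mem_product, mem_divisors] at hab
    obtain ⟨⟨ham, -⟩, hbn, -⟩ := hab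
    have hd : gcd (m / a) b ∣ gcd m n := gcd_div_dvd_gcd ham hbn
    simp only [Finset.mem_sigma, mem_divisors]
    exact ⟨⟨hd, gcd_ne_zero_left hm⟩, mul_div_gcd_dvd_mul_div_sq ham hbn,
      (div_ne_zero_iff_of_dvd (sq_dvd_mul_of_dvd_gcd hd)).2 ⟨mul_ne_zero hm hn,
        pow_ne_zero 2 (ne_zero_of_dvd_ne_zero (gcd_ne_zero_left hm) hd)⟩⟩
  · rintro ⟨d, e⟩ hde
    simp only [Finset.mem_sigma, mem_divisors] at hde
    obtain ⟨⟨hd, -⟩, he, -⟩ := hde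
    have hdm : d ∣ m := hd.trans (gcd_dvd_left m n)
    have hdg : d ∣ gcd m (d * e) := dvd_gcd hdm (dvd_mul_right d e)
    simp only [Finset.mem_product, mem_divisors]
    exact ⟨⟨(div_dvd_of_dvd hdg).trans (gcd_dvd_left _ _), hm⟩,
      mul_div_gcd_div_dvd hm hdm (hd.trans (gcd_dvd_right m n))
        ((dvd_div_iff_mul_dvd (sq_dvd_mul_of_dvd_gcd hd)).1 he), hn⟩
  · rintro ⟨a, b⟩ hab
    simp only [Finset.mem_product, mem_divisors] at hab
    obtain ⟨⟨ham, -⟩, hbn, -⟩ := hab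
    have ha : 0 < a := pos_of_dvd_of_pos ham (pos_of_ne_zero hm)
    have hd : 0 < gcd (m / a) b :=
      gcd_pos_of_pos_right _ (pos_of_dvd_of_pos hbn (pos_of_ne_zero hn))
    have hprod : gcd (m / a) b * (a * b / gcd (m / a) b) = a * b :=
      Nat.mul_div_cancel' ((gcd_dvd_right _ _).mul_left a)
    simp only [hprod, gcd_mul_eq_mul_gcd_div b ham, Nat.mul_div_cancel _ hd,
      Nat.mul_div_cancel_left _ ha]
  · rintro ⟨d, e⟩ hde
    simp only [Finset.mem_sigma, mem_divisors] at hde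
    obtain ⟨⟨hd, -⟩, -⟩ := hde
    have hdm : d ∣ m := hd.trans (gcd_dvd_left m n)
    have ha : gcd m (d * e) / d ∣ d * e :=
      (div_dvd_of_dvd (dvd_gcd hdm (dvd_mul_right d e))).trans (gcd_dvd_right _ _)
    simp only [gcd_div_gcd_div_eq hm hdm, Nat.mul_div_cancel' ha,
      Nat.mul_div_cancel_left _ (pos_of_dvd_of_pos hdm (pos_of_ne_zero hm))]
  · rintro ⟨a, b⟩ -
    exact congrArg f (Nat.mul_div_cancel' ((gcd_dvd_right _ _).mul_left a)).symm

theorem mul_div_sq_div_eq_div_mul {d e N : ℕ} (hd2 : d ^ 2 ∣ N) (he : e ∣ N / d ^ 2) :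
    d * (N / d ^ 2 / e) = N / (d * e) := by
  obtain ⟨c, rfl⟩ := hd2
  rcases eq_or_ne d 0 with rfl | hd
  · simp
  rw [Nat.mul_div_cancel_left c (by positivity)] at he ⊢
  obtain ⟨x, rfl⟩ := he
  rcases eq_or_ne e 0 with rfl | he
  · simp
  rw [show d ^ 2 * (e * x) = d * e * (d * x) by ring, Nat.mul_div_cancel_left x (by positivity),
    Nat.mul_div_cancel_left _ (by positivity)]

theorem sum_divisors_mul_sum_divisors_eq_sum_gcd {R : Type*} [CommSemiring R] {f g : ℕ → R}
    (hf : ∀ a b, f (a * b) = f a * f b) (hg : ∀ a b, g (a * b) = g a * g b) (m n : ℕ) :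
    (∑ a ∈ m.divisors, f (m / a) * g a) * ∑ b ∈ n.divisors, f (n / b) * g b =
      ∑ d ∈ (gcd m n).divisors,
        f d * g d * ∑ e ∈ (m * n / d ^ 2).divisors, f (m * n / d ^ 2 / e) * g e := by
  calc _ = ∑ a ∈ m.divisors, ∑ b ∈ n.divisors, f (m * n / (a * b)) * g (a * b) := by
        rw [Finset.sum_mul_sum]
        refine Finset.sum_congr rfl fun a ha ↦ Finset.sum_congr rfl fun b hb ↦ ?_
        rw [← Nat.div_mul_div_comm (dvd_of_mem_divisors ha) (dvd_of_mem_divisors hb), hf, hg]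
        ring
    _ = ∑ d ∈ (gcd m n).divisors, ∑ e ∈ (m * n / d ^ 2).divisors,
          f (m * n / (d * e)) * g (d * e) :=
        sum_divisors_mul_divisors_eq_sum_gcd (fun t ↦ f (m * n / t) * g t) m n
    _ = _ := by
        refine Finset.sum_congr rfl fun d hd ↦ ?_
        rw [Finset.mul_sum]
        refine Finset.sum_congr rfl fun e he ↦ ?_
        rw [← mul_div_sq_div_eq_div_mul (sq_dvd_mul_of_dvd_gcd (dvd_of_mem_divisors hd))
          (dvd_of_mem_divisors he), hf, hg]
        ring

end Nat

theorem twisted_divisor_sum_hecke_relation_general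
    (k : ℕ) (N₁ N₂ : ℕ)
    (ψ : DirichletCharacter ℂ N₁) (φ : DirichletCharacter ℂ N₂)
    (σ : ℕ → ℂ)
    (hσ : ∀ n : ℕ, σ n = ∑ d ∈ n.divisors, ψ ((n / d : ℕ)) * φ (d : ℕ) * (d : ℂ) ^ (k - 1))
    (m n : ℕ) :
    σ m * σ n =
      ∑ d ∈ (Nat.gcd m n).divisors, ψ (d : ℕ) * φ (d : ℕ) * (d : ℂ) ^ (k - 1) * σ (m * n / d ^ 2) := by
  have hψ (a b : ℕ) : ψ (a * b : ℕ) = ψ a * ψ b := by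
    push_cast
    exact map_mul ψ _ _
  have hφ (a b : ℕ) : φ (a * b : ℕ) * ((a * b : ℕ) : ℂ) ^ (k - 1) =
      φ a * (a : ℂ) ^ (k - 1) * (φ b * (b : ℂ) ^ (k - 1)) := by
    push_cast
    rw [map_mul, mul_pow]
    ring
  simpa only [hσ, mul_assoc] using Nat.sum_divisors_mul_sum_divisors_eq_sum_gcd
    (f := fun a ↦ ψ a) (g := fun d ↦ φ d * (d : ℂ) ^ (k - 1)) hψ hφ m n

theorem twisted_divisor_sum_hecke_relation
    (k : ℕ) (hk : 1 ≤ k) (N₁ N₂ : ℕ)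
    (ψ : DirichletCharacter ℂ N₁) (φ : DirichletCharacter ℂ N₂)
    (σ : ℕ → ℂ)
    (hσ : ∀ n : ℕ, σ n = ∑ d ∈ n.divisors, ψ ((n / d : ℕ)) * φ (d : ℕ) * (d : ℂ) ^ (k - 1))
    (m n : ℕ) (hm : 0 < m) (hn : 0 < n) :
    σ m * σ n =
      ∑ d ∈ (Nat.gcd m n).divisors, ψ (d : ℕ) * φ (d : ℕ) * (d : ℂ) ^ (k - 1) * σ (m * n / d ^ 2) :=
  twisted_divisor_sum_hecke_relation_general k N₁ N₂ ψ φ σ hσ m n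
end

section
/- Let $k \geq 1$, let $\psi, \phi$ be Dirichlet characters, let $p$ be prime, and set $\sigma(n) = \sum_{ad=n} \psi(a)\phi(d)d^{k-1}$ (with $\sigma(x) = 0$ if $x \notin \mathbb{Z}_{\geq 1}$). Then for every positive integer $n$: $\sigma(pn) = (\psi(p) + \phi(p)p^{k-1})\sigma(n) - \psi(p)\phi(p)p^{k-1}\sigma(n/p)$. -/
/-!
Write `σ = f ⋆ g` as the Dirichlet convolution of `f = ψ` and `g(d) = φ(d) d^(k-1)`, both
completely multiplicative. Split the divisors `d` of `p n` according to whether `p ∣ d`. Those with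
`p ∣ d` are `d = p e` with `e ∣ n` and contribute `g(p) σ(n)`. Those with `p ∤ d` divide `n`, and
they contribute `f(p)` times the part of `σ(n)` coming from divisors prime to `p`; the rest of
`σ(n)`, from the divisors `p e` of `n`, is `g(p) σ(n/p)` by the same computation.
-/

open Finset

namespace Nat

theorem divisors_mul_filter_dvd_left {p : ℕ} (hp : p ≠ 0) (m : ℕ) :
    {d ∈ (p * m).divisors | p ∣ d} = m.divisors.image (p * ·) := by
  ext d
  simp only [mem_filter, mem_divisors, mem_image]
  constructor
  · rintro ⟨⟨hd, hne⟩, e, rfl⟩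
    exact ⟨e, ⟨(Nat.mul_dvd_mul_iff_left (Nat.pos_of_ne_zero hp)).mp hd,
      right_ne_zero_of_mul hne⟩, rfl⟩
  · rintro ⟨e, ⟨he, hm⟩, rfl⟩
    exact ⟨⟨mul_dvd_mul_left p he, mul_ne_zero hp hm⟩, dvd_mul_right p e⟩

theorem Prime.divisors_mul_filter_not_dvd {p : ℕ} (hp : p.Prime) (n : ℕ) :
    {d ∈ (p * n).divisors | ¬p ∣ d} = {d ∈ n.divisors | ¬p ∣ d} := by
  ext d
  simp only [mem_filter, mem_divisors, mul_ne_zero_iff, hp.ne_zero, ne_eq, not_false_eq_true,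
    true_and]
  constructor
  · rintro ⟨⟨hd, hn⟩, hpd⟩
    exact ⟨⟨((hp.coprime_iff_not_dvd.mpr hpd).symm.dvd_of_dvd_mul_left hd), hn⟩, hpd⟩
  · rintro ⟨⟨hd, hn⟩, hpd⟩
    exact ⟨⟨hd.mul_left p, hn⟩, hpd⟩

end Nat

section DirichletConv

variable {R : Type*} [CommRing R] {f g : ℕ → R} {p : ℕ}

def dirichletConv (f g : ℕ → R) (n : ℕ) : R :=
  ∑ d ∈ n.divisors, f (n / d) * g d

theorem sum_divisors_mul_filter_dvd (hp : p ≠ 0) (hg : ∀ x, g (p * x) = g p * g x) (m : ℕ) :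
    ∑ d ∈ (p * m).divisors with p ∣ d, f (p * m / d) * g d = g p * dirichletConv f g m := by
  rw [Nat.divisors_mul_filter_dvd_left hp, sum_image (mul_right_injective₀ hp).injOn,
    dirichletConv, mul_sum]
  refine sum_congr rfl fun e _ => ?_
  rw [Nat.mul_div_mul_left _ _ (Nat.pos_of_ne_zero hp), hg]
  ring

theorem sum_divisors_filter_dvd (hp : p ≠ 0) (hg : ∀ x, g (p * x) = g p * g x) (n : ℕ) :
    ∑ d ∈ n.divisors with p ∣ d, f (n / d) * g d =
      g p * if p ∣ n then dirichletConv f g (n / p) else 0 := by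
  rw [mul_ite, mul_zero]
  split_ifs with hpn
  · obtain ⟨m, rfl⟩ := hpn
    rw [Nat.mul_div_cancel_left _ (Nat.pos_of_ne_zero hp)]
    exact sum_divisors_mul_filter_dvd hp hg m
  · refine sum_eq_zero fun d hd => absurd ?_ hpn
    rw [mem_filter] at hd
    exact hd.2.trans (Nat.dvd_of_mem_divisors hd.1)

theorem dirichletConv_prime_mul (hp : p.Prime) (hf : ∀ x, f (p * x) = f p * f x)
    (hg : ∀ x, g (p * x) = g p * g x) (n : ℕ) :
    dirichletConv f g (p * n) = (f p + g p) * dirichletConv f g n -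
      f p * g p * (if p ∣ n then dirichletConv f g (n / p) else 0) := by
  have hcoprime : ∑ d ∈ (p * n).divisors with ¬p ∣ d, f (p * n / d) * g d =
      f p * ∑ d ∈ n.divisors with ¬p ∣ d, f (n / d) * g d := by
    rw [hp.divisors_mul_filter_not_dvd, mul_sum]
    refine sum_congr rfl fun d hd => ?_
    rw [Nat.mul_div_assoc p (Nat.dvd_of_mem_divisors (mem_filter.mp hd).1), hf]
    ring
  have hsplit := sum_filter_add_sum_filter_not n.divisors (p ∣ ·) (fun d => f (n / d) * g d)
  rw [sum_divisors_filter_dvd hp.ne_zero hg] at hsplit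
  rw [dirichletConv, ← sum_filter_add_sum_filter_not _ (p ∣ ·),
    sum_divisors_mul_filter_dvd hp.ne_zero hg, hcoprime, dirichletConv, ← hsplit]
  ring

end DirichletConv

theorem twisted_divisor_sum_hecke_at_prime_general
    (k : ℕ) (N₁ N₂ : ℕ)
    (ψ : DirichletCharacter ℂ N₁) (φ : DirichletCharacter ℂ N₂)
    (p : ℕ) (hp : p.Prime)
    (σ : ℕ → ℂ)
    (hσ : ∀ n : ℕ, σ n = ∑ d ∈ n.divisors, ψ ((n / d : ℕ)) * φ (d : ℕ) * (d : ℂ) ^ (k - 1))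
    (n : ℕ) :
    σ (p * n) = (ψ (p : ℕ) + φ (p : ℕ) * (p : ℂ) ^ (k - 1)) * σ n -
      ψ (p : ℕ) * φ (p : ℕ) * (p : ℂ) ^ (k - 1) * (if p ∣ n then σ (n / p) else 0) := by
  have hconv : σ = dirichletConv (fun m : ℕ => ψ m) (fun d : ℕ => φ d * (d : ℂ) ^ (k - 1)) :=
    funext fun m => by simp only [hσ, dirichletConv, mul_assoc]
  rw [hconv]
  linear_combination dirichletConv_prime_mul (f := fun m : ℕ => ψ m)
    (g := fun d : ℕ => φ d * (d : ℂ) ^ (k - 1)) hp (fun x => by push_cast; exact map_mul ψ _ _)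
    (fun x => by push_cast; rw [map_mul, mul_pow]; ring) n

theorem twisted_divisor_sum_hecke_at_prime
    (k : ℕ) (hk : 1 ≤ k) (N₁ N₂ : ℕ)
    (ψ : DirichletCharacter ℂ N₁) (φ : DirichletCharacter ℂ N₂)
    (p : ℕ) (hp : p.Prime)
    (σ : ℕ → ℂ)
    (hσ : ∀ n : ℕ, σ n = ∑ d ∈ n.divisors, ψ ((n / d : ℕ)) * φ (d : ℕ) * (d : ℂ) ^ (k - 1))
    (n : ℕ) (hn : 0 < n) :
    σ (p * n) = (ψ (p : ℕ) + φ (p : ℕ) * (p : ℂ) ^ (k - 1)) * σ n -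
      ψ (p : ℕ) * φ (p : ℕ) * (p : ℂ) ^ (k - 1) * (if p ∣ n then σ (n / p) else 0) :=
  twisted_divisor_sum_hecke_at_prime_general k N₁ N₂ ψ φ p hp σ hσ n
end

section
/- Let $n \geq 1$ and let $A, B, x \in \mathbb{C}$ and $Y : \mathbb{Z}_{\geq 1} \to \mathbb{C}$ be arbitrary. Define $X : \mathbb{Z}_{\geq 0} \to \mathbb{C}$ by $X(0) = 1$, $X(1) = A - B x Y(1)$, and $X(e) = A\,X(e-1) - B\,X(e-2)$ for $e \geq 2$. Let $M$ be the $(n+1)\times(n+1)$ matrix (indices $0 \leq i,j \leq n$) with $M_{ij} = X(i-j)$ for $i \geq j$ and $M_{ij} = x^{j-i} Y(j-i)$ for $j > i$. Then $\det M = (1 - X(1)Y(1)x) \cdot (1 - A\,Y(1)\,x + B\,Y(2)\,x^2)^{n-1}$. -/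
/-!
Subtracting `A` times row `n - 1` from the last row and adding `B` times row `n - 2` clears every
entry of that row except the diagonal one: below the diagonal by the recurrence for `X`, and in
column `n - 1` by the choice of `X 1`. The diagonal entry becomes `1 - A Y(1) x + B Y(2) x²`, and
Laplace expansion along the row leaves the same matrix one size smaller, down to the `2 × 2` case
`1 - X(1) Y(1) x`.
-/

open Matrix

namespace Matrix

variable {R : Type*} [CommRing R]

theorem det_updateRow_sub_smul_add_smul {n : Type*} [Fintype n] [DecidableEq n]
    (M : Matrix n n R) {i j k : n} (hij : i ≠ j) (hik : i ≠ k) (a b : R) :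
    (M.updateRow i (M i - a • M j + b • M k)).det = M.det := by
  have h := det_updateRow_add_smul_self (M.updateRow i (M i + (-a) • M j)) hik b
  rw [updateRow_idem, updateRow_self, updateRow_ne hik.symm,
    det_updateRow_add_smul_self M hij, neg_smul, ← sub_eq_add_neg] at h
  exact h

theorem det_eq_mul_det_submatrix_castSucc_of_row_last_eq_single {n : ℕ}
    (M : Matrix (Fin (n + 1)) (Fin (n + 1)) R) {c : R}
    (h : M (Fin.last n) = Pi.single (Fin.last n) c) :
    M.det = c * (M.submatrix Fin.castSucc Fin.castSucc).det := by
  rw [det_succ_row M (Fin.last n), Fintype.sum_eq_single (Fin.last n)]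
  · simp [h, Fin.succAbove_last]
  · intro j hj
    simp [h, Pi.single_eq_of_ne hj]

end Matrix

section Toeplitz

variable {R : Type*}

def toeplitzMatrix (L U : ℕ → R) (n : ℕ) : Matrix (Fin n) (Fin n) R :=
  Matrix.of fun i j => if (j : ℕ) ≤ i then L (i - j) else U (j - i)

@[simp]
theorem toeplitzMatrix_apply (L U : ℕ → R) {n : ℕ} (i j : Fin n) :
    toeplitzMatrix L U n i j = if (j : ℕ) ≤ i then L (i - j) else U (j - i) := rfl

@[simp]
theorem toeplitzMatrix_submatrix_castSucc (L U : ℕ → R) (n : ℕ) :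
    (toeplitzMatrix L U (n + 1)).submatrix Fin.castSucc Fin.castSucc = toeplitzMatrix L U n :=
  rfl

variable [CommRing R]

theorem det_toeplitzMatrix_two (L U : ℕ → R) (hL0 : L 0 = 1) :
    (toeplitzMatrix L U 2).det = 1 - L 1 * U 1 := by
  simp [det_fin_two, hL0, mul_comm]

variable {L U : ℕ → R} {A B : R}

theorem toeplitzMatrix_row_last_sub_smul_add_smul (hL0 : L 0 = 1) (hL1 : L 1 = A - B * U 1)
    (hL : ∀ k, L (k + 2) = A * L (k + 1) - B * L k) (m : ℕ) :
    toeplitzMatrix L U (m + 3) (Fin.last (m + 2))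
        - A • toeplitzMatrix L U (m + 3) (Fin.last (m + 1)).castSucc
        + B • toeplitzMatrix L U (m + 3) (Fin.last m).castSucc.castSucc =
      Pi.single (Fin.last (m + 2)) (1 - A * U 1 + B * U 2) := by
  ext ⟨j, hj⟩
  obtain rfl | rfl | hjm : j = m + 2 ∨ j = m + 1 ∨ j ≤ m := by omega
  · simp [hL0, Fin.last]
  · simp [hL0, hL1, Fin.last, Fin.ext_iff]
  · obtain ⟨k, rfl⟩ := Nat.exists_eq_add_of_le hjm
    simp [Fin.last, Fin.ext_iff, hL, show ¬j = j + k + 2 by omega,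
      show j ≤ j + k + 2 by omega, show j ≤ j + k + 1 by omega,
      show j + k + 2 - j = k + 2 by omega, show j + k + 1 - j = k + 1 by omega]

theorem det_toeplitzMatrix_add_three (hL0 : L 0 = 1) (hL1 : L 1 = A - B * U 1)
    (hL : ∀ k, L (k + 2) = A * L (k + 1) - B * L k) (m : ℕ) :
    (toeplitzMatrix L U (m + 3)).det =
      (1 - A * U 1 + B * U 2) * (toeplitzMatrix L U (m + 2)).det := by
  rw [← det_updateRow_sub_smul_add_smul _ (i := Fin.last (m + 2))
      (j := (Fin.last (m + 1)).castSucc) (k := (Fin.last m).castSucc.castSucc)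
      (by simp [Fin.ext_iff]) (by simp [Fin.ext_iff]) A B,
    det_eq_mul_det_submatrix_castSucc_of_row_last_eq_single _
      (by rw [updateRow_self, toeplitzMatrix_row_last_sub_smul_add_smul hL0 hL1 hL]),
    ← toeplitzMatrix_submatrix_castSucc L U (m + 2)]
  congr 2
  ext i j
  simp

theorem det_toeplitzMatrix_add_two (hL0 : L 0 = 1) (hL1 : L 1 = A - B * U 1)
    (hL : ∀ k, L (k + 2) = A * L (k + 1) - B * L k) (m : ℕ) :
    (toeplitzMatrix L U (m + 2)).det = (1 - L 1 * U 1) * (1 - A * U 1 + B * U 2) ^ m := by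
  induction m with
  | zero => simp [det_toeplitzMatrix_two L U hL0]
  | succ m ih => rw [det_toeplitzMatrix_add_three hL0 hL1 hL, ih, pow_succ]; ring

end Toeplitz

theorem det_toeplitz_recurrence
    (n : ℕ) (hn : 1 ≤ n) (A B x : ℂ) (Y : ℕ → ℂ)
    (X : ℕ → ℂ)
    (hX0 : X 0 = 1)
    (hX1 : X 1 = A - B * x * Y 1)
    (hXe : ∀ e : ℕ, 2 ≤ e → X e = A * X (e - 1) - B * X (e - 2)) :
    Matrix.det (fun i j : Fin (n + 1) =>
      if (j : ℕ) ≤ (i : ℕ) then X ((i : ℕ) - (j : ℕ))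
      else x ^ ((j : ℕ) - (i : ℕ)) * Y ((j : ℕ) - (i : ℕ))) =
      (1 - X 1 * Y 1 * x) * (1 - A * Y 1 * x + B * Y 2 * x ^ 2) ^ (n - 1) := by
  obtain ⟨m, rfl⟩ := Nat.exists_eq_add_of_le' hn
  have hX : ∀ k, X (k + 2) = A * X (k + 1) - B * X k := fun k => hXe (k + 2) (by omega)
  have h := det_toeplitzMatrix_add_two (U := fun k => x ^ k * Y k) hX0 (by rw [hX1]; ring) hX m
  change (toeplitzMatrix X (fun k => x ^ k * Y k) (m + 2)).det = _
  rw [h, Nat.add_sub_cancel]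
  ring
end
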